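/- arXiv:1705.05019 — 5 statements merged into one kernel-verified Lean document; each statement's English description precedes it below -/
import Mathlib

section
/- For each ν ∈ (0,1) there exist δ = δ(ν) ∈ (0,1) and C_R = C_R(ν) ≥ 1 such that the following holds. Let 0 < α_0 ≤ 1 and let Ω ⊆ ℝ be ν-porous on scales α_0 to 1. Then there exists a set X ⊆ ℝ which is δ-regular with constant C_R on scales 0 to 1 and such that Ω ⊆ X(α_0), where X(α_0) = X + [−α_0, α_0] is the closed α_0-neighborhood of X. -/
open MeasureTheory

/-- `Ω ⊆ ℝ` is `ν`-porous on scales `α₀` to `α₁`: for every closed interval `I = [a, b]`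
with `α₀ ≤ |I| ≤ α₁` there is a closed subinterval `J ⊆ I` with `|J| = ν * |I|`
and `J ∩ Ω = ∅`. -/
def IsPorous (ν α₀ α₁ : ℝ) (Ω : Set ℝ) : Prop :=
  ∀ a b : ℝ, α₀ ≤ b - a → b - a ≤ α₁ →
    ∃ c : ℝ, a ≤ c ∧ c + ν * (b - a) ≤ b ∧
      Set.Icc c (c + ν * (b - a)) ∩ Ω = ∅

/-- `X ⊆ ℝ` is `δ`-regular with constant `C` on scales `α₀` to `α₁`: `X` is closed and
nonempty, and there is a Borel measure `μ` supported on `X` with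
`μ I ≤ C * |I| ^ δ` for every interval `I` with `α₀ ≤ |I| ≤ α₁` and
`μ I ≥ C⁻¹ * |I| ^ δ` for every such interval centered at a point of `X`. -/
def IsADRegular (δ C α₀ α₁ : ℝ) (X : Set ℝ) : Prop :=
  IsClosed X ∧ X.Nonempty ∧
    ∃ μ : Measure ℝ,
      μ Xᶜ = 0 ∧
      (∀ a b : ℝ, α₀ ≤ b - a → b - a ≤ α₁ →
        μ (Set.Icc a b) ≤ ENNReal.ofReal (C * (b - a) ^ δ)) ∧
      (∀ x ∈ X, ∀ a b : ℝ, x = (a + b) / 2 → α₀ ≤ b - a → b - a ≤ α₁ →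
        ENNReal.ofReal (C⁻¹ * (b - a) ^ δ) ≤ μ (Set.Icc a b))

/-!
Choose `N ≥ 2` with `ν (N + 1) ≥ 2`: by porosity, every `(N + 1)`-adic cell of length at least
`α₀` then has a child cell missing `Ω`. Deleting one child of every cell in every generation (a
child missing `Ω` while the cells are at least `α₀` long) leaves a Cantor set `X` in which every
cell keeps `N` children. Its natural measure, the image of the uniform measure on digit sequences,
gives a generation-`j` cell mass `N⁻ʲ = ((N + 1)⁻ʲ) ^ δ` with `δ = log_{N+1} N`, which makes `X`
`δ`-regular; and a point of `Ω` is never deleted down to scale `α₀`, so it is `α₀`-close to `X`.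
-/

open ProbabilityTheory Set
open scoped ENNReal

lemma logb_add_one_mem_Ioo {N : ℕ} (hN : 1 < N) : Real.logb (N + 1) N ∈ Ioo 0 1 := by
  have hN' : (1 : ℝ) < N := by exact_mod_cast hN
  refine ⟨Real.logb_pos (by linarith) hN', ?_⟩
  exact (Real.logb_lt_logb (by linarith) (by linarith) (lt_add_one _)).trans_eq
    (Real.logb_self_eq_one (by linarith))

lemma inv_pow_eq_rpow_logb {N : ℕ} (hN : 0 < N) (j : ℕ) :
    (N : ℝ)⁻¹ ^ j = (((N : ℝ) + 1)⁻¹ ^ j) ^ Real.logb (N + 1) N := by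
  rw [← Real.rpow_natCast_mul (by positivity), mul_comm, Real.rpow_mul_natCast (by positivity),
    Real.inv_rpow (by positivity), Real.rpow_logb (by positivity) ?_ (by positivity)]
  have : (0 : ℝ) < N := by exact_mod_cast hN
  linarith

lemma inv_natCast_pow_eq_ofReal {N : ℕ} (hN : 0 < N) (j : ℕ) :
    (N : ℝ≥0∞)⁻¹ ^ j = ENNReal.ofReal ((N : ℝ)⁻¹ ^ j) := by
  rw [ENNReal.ofReal_pow (by positivity), ENNReal.ofReal_inv_of_pos (by positivity),
    ENNReal.ofReal_natCast]

namespace GapCantor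

def cell (N j : ℕ) (k : ℤ) : Set ℝ :=
  Icc (k * ((N : ℝ) + 1)⁻¹ ^ j) ((k + 1) * ((N : ℝ) + 1)⁻¹ ^ j)

lemma cell_succ_subset {N j : ℕ} {k i : ℤ} (h₁ : (N + 1) * k ≤ i)
    (h₂ : i < (N + 1) * k + (N + 1)) : cell N (j + 1) i ⊆ cell N j k := by
  have h₁' : ((N : ℝ) + 1) * k ≤ i := by exact_mod_cast h₁
  have h₂' : (i : ℝ) + 1 ≤ ((N : ℝ) + 1) * k + (N + 1) := by exact_mod_cast h₂
  apply Icc_subset_Icc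
  · calc (k : ℝ) * ((N : ℝ) + 1)⁻¹ ^ j
        = (((N : ℝ) + 1) * k) * ((N : ℝ) + 1)⁻¹ ^ (j + 1) := by rw [pow_succ]; field_simp
      _ ≤ i * ((N : ℝ) + 1)⁻¹ ^ (j + 1) := by gcongr
  · calc ((i : ℝ) + 1) * ((N : ℝ) + 1)⁻¹ ^ (j + 1)
        ≤ (((N : ℝ) + 1) * k + (N + 1)) * ((N : ℝ) + 1)⁻¹ ^ (j + 1) := by gcongr
      _ = (k + 1) * ((N : ℝ) + 1)⁻¹ ^ j := by rw [pow_succ]; field_simp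

lemma abs_sub_le_of_mem_cell {N j : ℕ} {k : ℤ} {x y : ℝ} (hx : x ∈ cell N j k)
    (hy : y ∈ cell N j k) : |x - y| ≤ ((N : ℝ) + 1)⁻¹ ^ j := by
  obtain ⟨hx₁, hx₂⟩ := hx
  obtain ⟨hy₁, hy₂⟩ := hy
  rw [abs_sub_le_iff]
  constructor <;> nlinarith

lemma mem_cell_floor (N j : ℕ) (x : ℝ) : x ∈ cell N j ⌊x * ((N : ℝ) + 1) ^ j⌋ := by
  have hpos : (0 : ℝ) < ((N : ℝ) + 1) ^ j := by positivity
  simp only [cell, inv_pow, ← div_eq_mul_inv, mem_Icc, div_le_iff₀ hpos, le_div_iff₀ hpos]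
  exact ⟨Int.floor_le _, (Int.lt_floor_add_one _).le⟩

lemma floor_mul_succ_bounds (N : ℕ) (y : ℝ) :
    (N + 1) * ⌊y⌋ ≤ ⌊((N : ℝ) + 1) * y⌋ ∧ ⌊((N : ℝ) + 1) * y⌋ < (N + 1) * ⌊y⌋ + (N + 1) := by
  have h₁ := Int.floor_le y
  have h₂ := Int.lt_floor_add_one y
  have h₃ := Int.floor_le (((N : ℝ) + 1) * y)
  constructor
  · rw [Int.le_floor]
    push_cast
    nlinarith
  · have : (⌊((N : ℝ) + 1) * y⌋ : ℝ) < (N + 1) * ⌊y⌋ + (N + 1) := by nlinarith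
    exact_mod_cast this

variable {N : ℕ} (g : ℕ → ℤ → Fin (N + 1))

-- The address `ξ = (k, d)` starts in the generation-`0` cell `k`; in generation `j` the digit
-- `d j` picks one of the `N` children of the current cell other than the deleted child `g j _`,
-- which `Fin.succAbove` skips.
def cellIndex (ξ : ℤ × (ℕ → Fin N)) : ℕ → ℤ
  | 0 => ξ.1
  | j + 1 => (N + 1) * cellIndex ξ j + ((g j (cellIndex ξ j)).succAbove (ξ.2 j) : ℕ)

lemma cellIndex_succ_bounds (ξ : ℤ × (ℕ → Fin N)) (j : ℕ) :
    (N + 1) * cellIndex g ξ j ≤ cellIndex g ξ (j + 1) ∧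
      cellIndex g ξ (j + 1) < (N + 1) * cellIndex g ξ j + (N + 1) := by
  have := ((g j (cellIndex g ξ j)).succAbove (ξ.2 j)).is_lt
  simp only [cellIndex]
  omega

lemma cellIndex_succ_eq_iff {ξ ξ' : ℤ × (ℕ → Fin N)} {j : ℕ} :
    cellIndex g ξ' (j + 1) = cellIndex g ξ (j + 1) ↔
      cellIndex g ξ' j = cellIndex g ξ j ∧ ξ'.2 j = ξ.2 j := by
  constructor
  · intro h
    have hdiv (ζ : ℤ × (ℕ → Fin N)) : cellIndex g ζ (j + 1) / (N + 1) = cellIndex g ζ j := by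
      have := cellIndex_succ_bounds g ζ j
      rw [Int.ediv_eq_iff_of_pos (by positivity)]
      constructor <;> linarith
    have hj : cellIndex g ξ' j = cellIndex g ξ j := by rw [← hdiv, h, hdiv]
    refine ⟨hj, Fin.succAbove_right_injective (p := g j (cellIndex g ξ j)) (Fin.ext ?_)⟩
    simp only [cellIndex, hj] at h
    omega
  · rintro ⟨hj, hd⟩
    simp only [cellIndex, hj, hd]

lemma cellIndex_eq_iff {ξ ξ' : ℤ × (ℕ → Fin N)} {j : ℕ} :
    cellIndex g ξ' j = cellIndex g ξ j ↔ ξ'.1 = ξ.1 ∧ ∀ i < j, ξ'.2 i = ξ.2 i := by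
  induction j with
  | zero => simp [cellIndex]
  | succ j ih => simp only [cellIndex_succ_eq_iff, ih, Nat.forall_lt_succ_right, and_assoc]

lemma measurable_cellIndex (j : ℕ) : Measurable (cellIndex g · j) := by
  induction j with
  | zero => exact measurable_fst
  | succ j ih =>
    exact (Measurable.of_discrete (f := fun p : ℤ × Fin N => ((N : ℤ) + 1) * p.1 +
      ((g j p.1).succAbove p.2 : ℕ))).comp (ih.prodMk ((measurable_pi_apply j).comp measurable_snd))

noncomputable def coding (ξ : ℤ × (ℕ → Fin N)) : ℝ :=
  ⨆ j, (cellIndex g ξ j : ℝ) * ((N : ℝ) + 1)⁻¹ ^ j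

lemma coding_mem_cell (ξ : ℤ × (ℕ → Fin N)) (j : ℕ) :
    coding g ξ ∈ cell N j (cellIndex g ξ j) := by
  have hle (j : ℕ) : (cellIndex g ξ j : ℝ) * ((N : ℝ) + 1)⁻¹ ^ j
      ≤ (cellIndex g ξ j + 1) * ((N : ℝ) + 1)⁻¹ ^ j := by gcongr; linarith
  have hsub (j : ℕ) := (Icc_subset_Icc_iff (hle (j + 1))).1
    (cell_succ_subset (cellIndex_succ_bounds g ξ j).1 (cellIndex_succ_bounds g ξ j).2)
  exact mem_iInter.1 (Monotone.ciSup_mem_iInter_Icc_of_antitone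
    (monotone_nat_of_le_succ fun j => (hsub j).1) (antitone_nat_of_succ_le fun j => (hsub j).2)
    hle) j

lemma measurable_coding : Measurable (coding g) :=
  Measurable.iSup fun j => (measurable_from_top.comp (measurable_cellIndex g j)).mul_const _

variable (N) in
noncomputable def addressMeasure : Measure (ℤ × (ℕ → Fin N)) :=
  Measure.count.prod (Measure.infinitePi fun _ => uniformOn univ)

lemma addressMeasure_cylinder [NeZero N] (c : ℤ) (d : ℕ → Fin N) (j : ℕ) :
    addressMeasure N {ξ | ξ.1 = c ∧ ∀ i < j, ξ.2 i = d i} = (N : ℝ≥0∞)⁻¹ ^ j := by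
  have hcyl : {ξ : ℤ × (ℕ → Fin N) | ξ.1 = c ∧ ∀ i < j, ξ.2 i = d i}
      = {c} ×ˢ (Finset.range j : Set ℕ).pi fun i => {d i} := by
    ext ξ
    simp
  rw [hcyl, addressMeasure, Measure.prod_prod, Measure.count_singleton, one_mul,
    Measure.infinitePi_pi _ fun _ _ => measurableSet_singleton _]
  simp [uniformOn_univ]

lemma addressMeasure_cellIndex_eq_self [NeZero N] (ξ : ℤ × (ℕ → Fin N)) (j : ℕ) :
    addressMeasure N {ξ' | cellIndex g ξ' j = cellIndex g ξ j} = (N : ℝ≥0∞)⁻¹ ^ j := by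
  simp_rw [cellIndex_eq_iff]
  exact addressMeasure_cylinder ξ.1 ξ.2 j

lemma addressMeasure_cellIndex_eq_le [NeZero N] (j : ℕ) (K : ℤ) :
    addressMeasure N {ξ | cellIndex g ξ j = K} ≤ (N : ℝ≥0∞)⁻¹ ^ j := by
  rcases eq_empty_or_nonempty {ξ | cellIndex g ξ j = K} with hK | ⟨ξ, rfl⟩
  · simp [hK]
  · exact (addressMeasure_cellIndex_eq_self g ξ j).le

noncomputable def cantorMeasure : Measure ℝ := (addressMeasure N).map (coding g)

lemma cantorMeasure_apply {s : Set ℝ} (hs : MeasurableSet s) :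
    cantorMeasure g s = addressMeasure N (coding g ⁻¹' s) :=
  Measure.map_apply (measurable_coding g) hs

lemma cantorMeasure_Icc_le [NeZero N] {a b : ℝ} {j : ℕ} (hab : b - a ≤ ((N : ℝ) + 1)⁻¹ ^ j) :
    cantorMeasure g (Icc a b) ≤ 3 * (N : ℝ≥0∞)⁻¹ ^ j := by
  set s := ((N : ℝ) + 1)⁻¹ ^ j
  have hs : 0 < s := by positivity
  -- `Icc a b` meets at most three generation-`j` cells.
  have hcover : coding g ⁻¹' Icc a b ⊆
      ⋃ K ∈ Finset.Icc (⌈a / s⌉ - 1) ⌊b / s⌋, {ξ | cellIndex g ξ j = K} := by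
    intro ξ hξ
    obtain ⟨h₁, h₂⟩ := coding_mem_cell g ξ j
    simp only [mem_iUnion, Finset.mem_Icc, mem_ofPred_eq, exists_prop]
    refine ⟨_, ⟨?_, ?_⟩, rfl⟩
    · rw [sub_le_iff_le_add, Int.ceil_le, div_le_iff₀ hs]
      push_cast
      linarith [hξ.1]
    · rw [Int.le_floor, le_div_iff₀ hs]
      linarith [hξ.2]
  have hcard : (Finset.Icc (⌈a / s⌉ - 1) ⌊b / s⌋).card ≤ 3 := by
    have hba : b / s ≤ a / s + 1 := by
      rw [div_add_one hs.ne', div_le_div_iff_of_pos_right hs]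
      linarith
    have : (⌊b / s⌋ : ℝ) ≤ ⌈a / s⌉ + 1 :=
      (Int.floor_le _).trans (hba.trans (by gcongr; exact Int.le_ceil _))
    have : ⌊b / s⌋ ≤ ⌈a / s⌉ + 1 := by exact_mod_cast this
    rw [Int.card_Icc]
    omega
  calc cantorMeasure g (Icc a b) = addressMeasure N (coding g ⁻¹' Icc a b) :=
        cantorMeasure_apply g measurableSet_Icc
    _ ≤ ∑ K ∈ Finset.Icc (⌈a / s⌉ - 1) ⌊b / s⌋, addressMeasure N {ξ | cellIndex g ξ j = K} :=
        (measure_mono hcover).trans (measure_biUnion_finset_le _ _)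
    _ ≤ (Finset.Icc (⌈a / s⌉ - 1) ⌊b / s⌋).card • (N : ℝ≥0∞)⁻¹ ^ j :=
        Finset.sum_le_card_nsmul _ _ _ fun K _ => addressMeasure_cellIndex_eq_le g j K
    _ ≤ 3 * (N : ℝ≥0∞)⁻¹ ^ j := by
        rw [nsmul_eq_mul]
        gcongr
        exact_mod_cast hcard

lemma inv_pow_le_cantorMeasure_cell [NeZero N] (ξ : ℤ × (ℕ → Fin N)) (j : ℕ) :
    (N : ℝ≥0∞)⁻¹ ^ j ≤ cantorMeasure g (cell N j (cellIndex g ξ j)) := by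
  rw [cantorMeasure_apply g (s := cell N j _) measurableSet_Icc,
    ← addressMeasure_cellIndex_eq_self g ξ j]
  refine measure_mono fun ξ' (hξ' : cellIndex g ξ' j = _) => ?_
  rw [mem_preimage, ← hξ']
  exact coding_mem_cell g ξ' j

lemma cantorMeasure_Icc_self (hN : 1 < N) (a : ℝ) : cantorMeasure g (Icc a a) = 0 := by
  have : NeZero N := ⟨by omega⟩
  have hlim : Filter.Tendsto (fun j : ℕ => 3 * (N : ℝ≥0∞)⁻¹ ^ j) Filter.atTop (nhds 0) := by
    simpa using ENNReal.Tendsto.const_mul (a := 3) (ENNReal.tendsto_pow_atTop_nhds_zero_of_lt_one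
      (ENNReal.inv_lt_one.2 (show (1 : ℝ≥0∞) < N by exact_mod_cast hN))) (by simp)
  exact nonpos_iff_eq_zero.1 <| ge_of_tendsto' hlim fun j =>
    cantorMeasure_Icc_le g (by rw [sub_self]; positivity)

lemma cantorMeasure_Icc_le_rpow (hN : 1 < N) {a b : ℝ} (hab : a ≤ b) (hba : b - a ≤ 1) :
    cantorMeasure g (Icc a b) ≤ ENNReal.ofReal (4 * (N + 1) * (b - a) ^ Real.logb (N + 1) N) := by
  have : NeZero N := ⟨by omega⟩
  rcases hab.eq_or_lt with rfl | hlt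
  · rw [cantorMeasure_Icc_self g hN]
    exact bot_le
  have hN' : (1 : ℝ) < N := by exact_mod_cast hN
  obtain ⟨n, hn, hn'⟩ := exists_nat_pow_near_of_lt_one (sub_pos.2 hlt) hba
    (inv_pos.2 (by positivity : (0 : ℝ) < N + 1)) (inv_lt_one_of_one_lt₀ (by linarith))
  have key : (N : ℝ)⁻¹ ^ n ≤ N * (b - a) ^ Real.logb (N + 1) N :=
    calc (N : ℝ)⁻¹ ^ n = N * (N : ℝ)⁻¹ ^ (n + 1) := by rw [pow_succ]; field_simp
      _ = N * (((N : ℝ) + 1)⁻¹ ^ (n + 1)) ^ Real.logb (N + 1) N := by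
        rw [inv_pow_eq_rpow_logb (by omega)]
      _ ≤ N * (b - a) ^ Real.logb (N + 1) N := by
        gcongr
        exact (logb_add_one_mem_Ioo hN).1.le
  calc cantorMeasure g (Icc a b) ≤ 3 * (N : ℝ≥0∞)⁻¹ ^ n := cantorMeasure_Icc_le g hn'
    _ = ENNReal.ofReal (3 * (N : ℝ)⁻¹ ^ n) := by
        rw [inv_natCast_pow_eq_ofReal (by omega), ENNReal.ofReal_mul (by norm_num),
          ENNReal.ofReal_ofNat]
    _ ≤ ENNReal.ofReal (4 * (N + 1) * (b - a) ^ Real.logb (N + 1) N) := by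
        apply ENNReal.ofReal_le_ofReal
        nlinarith [Real.rpow_nonneg (sub_nonneg.2 hab) (Real.logb (N + 1) N)]

noncomputable def cantorSet : Set ℝ := closure (range (coding g))

lemma le_cantorMeasure_Icc (hN : 1 < N) {x a b : ℝ} (hx : x ∈ cantorSet g)
    (hxab : x = (a + b) / 2) (hab : a ≤ b) (hba : b - a ≤ 1) :
    ENNReal.ofReal ((4 * ((N : ℝ) + 1))⁻¹ * (b - a) ^ Real.logb (N + 1) N)
      ≤ cantorMeasure g (Icc a b) := by
  have : NeZero N := ⟨by omega⟩
  obtain ⟨hδ₀, hδ₁⟩ := logb_add_one_mem_Ioo hN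
  rcases hab.eq_or_lt with rfl | hlt
  · simp [Real.zero_rpow hδ₀.ne']
  have hr : 0 < b - a := sub_pos.2 hlt
  obtain ⟨n, hn, hn'⟩ := exists_nat_pow_near_of_lt_one (by positivity : 0 < (b - a) / 4)
    (by linarith) (inv_pos.2 (by positivity : (0 : ℝ) < N + 1))
    (inv_lt_one_of_one_lt₀ (by simp; omega))
  obtain ⟨ξ, hξ⟩ := Metric.mem_closure_range_iff.1 hx ((b - a) / 4) (by positivity)
  have hsub : cell N (n + 1) (cellIndex g ξ (n + 1)) ⊆ Icc a b := by
    intro y hy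
    have hy' := abs_sub_le_of_mem_cell hy (coding_mem_cell g ξ (n + 1))
    rw [Real.dist_eq] at hξ
    rw [abs_le] at hy'
    rw [abs_lt] at hξ
    constructor <;> linarith
  have hscale : (4 * ((N : ℝ) + 1))⁻¹ * (b - a) ≤ ((N : ℝ) + 1)⁻¹ ^ (n + 1) := by
    rw [pow_succ]
    calc (4 * ((N : ℝ) + 1))⁻¹ * (b - a) = (b - a) / 4 * ((N : ℝ) + 1)⁻¹ := by field_simp
      _ ≤ _ := by gcongr
  have key : (4 * ((N : ℝ) + 1))⁻¹ * (b - a) ^ Real.logb (N + 1) N ≤ (N : ℝ)⁻¹ ^ (n + 1) :=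
    calc (4 * ((N : ℝ) + 1))⁻¹ * (b - a) ^ Real.logb (N + 1) N
        ≤ (4 * ((N : ℝ) + 1))⁻¹ ^ Real.logb (N + 1) N * (b - a) ^ Real.logb (N + 1) N := by
          gcongr
          simpa using Real.rpow_le_rpow_of_exponent_ge (x := (4 * ((N : ℝ) + 1))⁻¹)
            (by positivity) (inv_le_one_of_one_le₀ (by linarith)) hδ₁.le
      _ = ((4 * ((N : ℝ) + 1))⁻¹ * (b - a)) ^ Real.logb (N + 1) N :=
          (Real.mul_rpow (by positivity) hr.le).symm
      _ ≤ (((N : ℝ) + 1)⁻¹ ^ (n + 1)) ^ Real.logb (N + 1) N := by gcongr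
      _ = (N : ℝ)⁻¹ ^ (n + 1) := (inv_pow_eq_rpow_logb (by omega) _).symm
  calc ENNReal.ofReal ((4 * ((N : ℝ) + 1))⁻¹ * (b - a) ^ Real.logb (N + 1) N)
      ≤ ENNReal.ofReal ((N : ℝ)⁻¹ ^ (n + 1)) := ENNReal.ofReal_le_ofReal key
    _ = (N : ℝ≥0∞)⁻¹ ^ (n + 1) := (inv_natCast_pow_eq_ofReal (by omega) _).symm
    _ ≤ cantorMeasure g (cell N (n + 1) (cellIndex g ξ (n + 1))) :=
        inv_pow_le_cantorMeasure_cell g ξ (n + 1)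
    _ ≤ cantorMeasure g (Icc a b) := measure_mono hsub

theorem isADRegular_cantorSet (hN : 1 < N) :
    IsADRegular (Real.logb (N + 1) N) (4 * (N + 1)) 0 1 (cantorSet g) := by
  have : NeZero N := ⟨by omega⟩
  refine ⟨isClosed_closure, (range_nonempty _).mono subset_closure, cantorMeasure g, ?_,
    fun a b h₀ h₁ => cantorMeasure_Icc_le_rpow g hN (by linarith) h₁,
    fun x hx a b hxab h₀ h₁ => le_cantorMeasure_Icc g hN hx hxab (by linarith) h₁⟩
  rw [cantorMeasure_apply g (s := (cantorSet g)ᶜ) isClosed_closure.measurableSet.compl,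
    preimage_compl,
    show coding g ⁻¹' cantorSet g = univ from preimage_eq_univ_iff.2 subset_closure,
    compl_univ, measure_empty]

lemma exists_abs_sub_coding_le [NeZero N] (x : ℝ) (J : ℕ)
    (hx : ∀ j < J, ∀ k, x ∉ cell N (j + 1) ((N + 1) * k + g j k)) :
    ∃ ξ, |x - coding g ξ| ≤ ((N : ℝ) + 1)⁻¹ ^ J := by
  set K : ℕ → ℤ := fun j => ⌊x * ((N : ℝ) + 1) ^ j⌋
  have hxK (j : ℕ) : x ∈ cell N j (K j) := mem_cell_floor N j x
  have hchild (j : ℕ) : (N + 1) * K j ≤ K (j + 1) ∧ K (j + 1) < (N + 1) * K j + (N + 1) := by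
    have := floor_mul_succ_bounds N (x * ((N : ℝ) + 1) ^ j)
    rwa [show ((N : ℝ) + 1) * (x * ((N : ℝ) + 1) ^ j) = x * ((N : ℝ) + 1) ^ (j + 1) by ring]
      at this
  have hdigit (j : ℕ) :
      ∃ d : Fin N, j < J → K (j + 1) = (N + 1) * K j + ((g j (K j)).succAbove d : ℕ) := by
    have := hchild j
    obtain ⟨c, hc⟩ : ∃ c : Fin (N + 1), K (j + 1) = (N + 1) * K j + (c : ℕ) :=
      ⟨⟨(K (j + 1) - (N + 1) * K j).toNat, by omega⟩, by simp; omega⟩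
    by_cases hj : j < J
    · have hc' : c ≠ g j (K j) := by
        rintro rfl
        exact hx j hj (K j) (hc ▸ hxK (j + 1))
      obtain ⟨d, rfl⟩ := Fin.exists_succAbove_eq hc'
      exact ⟨d, fun _ => hc⟩
    · exact ⟨0, fun h => absurd h hj⟩
  choose d hd using hdigit
  have hidx (j : ℕ) (hj : j ≤ J) : cellIndex g (K 0, d) j = K j := by
    induction j with
    | zero => rfl
    | succ j ih => rw [cellIndex, ih (by omega), hd j (by omega)]
  exact ⟨(K 0, d), abs_sub_le_of_mem_cell (hxK J) (hidx J le_rfl ▸ coding_mem_cell g _ J)⟩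

end GapCantor

open GapCantor in
lemma IsPorous.exists_cell_disjoint {ν α₀ : ℝ} {Ω : Set ℝ} (hΩ : IsPorous ν α₀ 1 Ω) {N j : ℕ}
    (hν : 2 ≤ ν * (N + 1)) (hj : α₀ ≤ ((N : ℝ) + 1)⁻¹ ^ j) (k : ℤ) :
    ∃ i : Fin (N + 1), cell N (j + 1) ((N + 1) * k + (i : ℕ)) ∩ Ω = ∅ := by
  set s := ((N : ℝ) + 1)⁻¹ ^ j
  set t := ((N : ℝ) + 1)⁻¹ ^ (j + 1)
  have ht : 0 < t := by positivity
  have hst : s = (N + 1) * t := by simp only [s, t, pow_succ]; field_simp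
  obtain ⟨c, hc₁, hc₂, hcΩ⟩ := hΩ (k * s) ((k + 1) * s) (by linarith) (by
    rw [show ((k : ℝ) + 1) * s - k * s = s by ring]
    exact pow_le_one₀ (by positivity) (inv_le_one_of_one_le₀ (by simp)))
  rw [show ((k : ℝ) + 1) * s - k * s = s by ring] at hc₂ hcΩ
  -- The first generation-`(j + 1)` cell to the right of `c` fits into the gap, as `2 t ≤ ν s`.
  set i := ⌈c / t⌉
  have hi₁ : c ≤ i * t := by rw [← div_le_iff₀ ht]; exact Int.le_ceil _
  have hi₂ : (i : ℝ) * t < c + t := by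
    rw [← lt_div_iff₀ ht, add_div, div_self ht.ne']
    exact Int.ceil_lt_add_one _
  have h2t : 2 * t ≤ ν * s := by rw [hst]; nlinarith
  have hlo : (N + 1) * k ≤ i := by
    have : (((N + 1) * k : ℤ) : ℝ) * t ≤ i * t := by
      have : (((N + 1) * k : ℤ) : ℝ) * t = k * s := by rw [hst]; push_cast; ring
      linarith
    exact_mod_cast le_of_mul_le_mul_right this ht
  have hhi : i < (N + 1) * k + N := by
    have : (i : ℝ) * t < (((N + 1) * k + N : ℤ) : ℝ) * t := by
      have : (((N + 1) * k + N : ℤ) : ℝ) * t = (k + 1) * s - t := by rw [hst]; push_cast; ring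
      linarith
    exact_mod_cast lt_of_mul_lt_mul_right this ht.le
  refine ⟨⟨(i - (N + 1) * k).toNat, by omega⟩, ?_⟩
  rw [show (N + 1) * k + ((i - (N + 1) * k).toNat : ℤ) = i by omega, ← subset_empty_iff, ← hcΩ]
  refine inter_subset_inter_left _ (Icc_subset_Icc hi₁ ?_)
  linarith

open GapCantor in
/-- **Porous sets embed into neighborhoods of Ahlfors–David regular sets**
(Lemma 4.3 of the paper).  For each `ν ∈ (0,1)` there are `δ = δ(ν) ∈ (0,1)` and
`C_R = C_R(ν) ≥ 1` such that: if `0 < α₀ ≤ 1` and `Ω ⊆ ℝ` is `ν`-porous on scales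
`α₀` to `1`, then there is a set `X ⊆ ℝ`, `δ`-regular with constant `C_R` on scales
`0` to `1`, with `Ω ⊆ X(α₀) = X + [-α₀, α₀]`. -/
theorem porous_subset_neighborhood_of_regular
    (ν : ℝ) (hν : ν ∈ Set.Ioo (0:ℝ) 1) :
    ∃ δ ∈ Set.Ioo (0:ℝ) 1, ∃ C_R : ℝ, 1 ≤ C_R ∧
      ∀ α₀ : ℝ, 0 < α₀ → α₀ ≤ 1 → ∀ Ω : Set ℝ, IsPorous ν α₀ 1 Ω →
        ∃ X : Set ℝ, IsADRegular δ C_R 0 1 X ∧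
          Ω ⊆ {y : ℝ | ∃ x ∈ X, |y - x| ≤ α₀} := by
  obtain ⟨N, hN, hνN⟩ : ∃ N : ℕ, 1 < N ∧ 2 ≤ ν * (N + 1) := by
    obtain ⟨n, hn⟩ := exists_nat_gt (2 / ν)
    refine ⟨n + 2, by omega, ?_⟩
    rw [div_lt_iff₀ hν.1] at hn
    push_cast
    nlinarith [hν.1]
  refine ⟨Real.logb (N + 1) N, logb_add_one_mem_Ioo hN, 4 * (N + 1), by linarith, ?_⟩
  intro α₀ hα₀ hα₁ Ω hΩ
  have : NeZero N := ⟨by omega⟩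
  choose! g hg using fun j k (hj : α₀ ≤ ((N : ℝ) + 1)⁻¹ ^ j) => hΩ.exists_cell_disjoint hνN hj k
  refine ⟨cantorSet g, isADRegular_cantorSet g hN, fun y hy => ?_⟩
  obtain ⟨J, hJ, hJ'⟩ := exists_nat_pow_near_of_lt_one hα₀ hα₁
    (inv_pos.2 (by positivity : (0 : ℝ) < N + 1)) (inv_lt_one_of_one_lt₀ (by simp; omega))
  obtain ⟨ξ, hξ⟩ := exists_abs_sub_coding_le g y (J + 1) fun j hj k hyk =>
    (hg j k (hJ'.trans (pow_le_pow_of_le_one (by positivity)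
      (inv_le_one_of_one_le₀ (by simp)) (by omega)))).subset ⟨hyk, hy⟩
  exact ⟨coding g ξ, subset_closure (mem_range_self ξ), hξ.trans hJ.le⟩
end

section
/- Let α ∈ (0,1). There exists a constant C > 0 depending only on α such that the following holds for all ρ ∈ (0,1] and all h ∈ (0,1). Set N_0 := ⌈(ρ/4) log(1/h)⌉ and consider words w = w_0 w_1 … w_{8N_0−1} with letters w_j ∈ {1,2}. Let X be the set of such words of length 8N_0 with the property that for every ℓ ∈ {0,1,…,7}, the block w_{ℓN_0} … w_{(ℓ+1)N_0−1} of length N_0 contains strictly fewer than αN_0 letters equal to 1. Then the number of elements of X satisfies #X ≤ C · h^{−4√α}. -/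
/-!
Adding up the eight block conditions, every word in `X` has fewer than `α n` letters `1`,
where `n = 8 N₀`. For `0 < t ≤ 1` the weights `t ^ #(ones of w)` give
`t ^ (α n) · #X ≤ ∑_w t ^ #(ones of w) = (1 + t) ^ n ≤ exp (t n)`, and the choice `t = √α`
balances the two sides to `#X ≤ exp (2 √α n)`. Finally `n ≤ 2 log (1/h) + 8` because `ρ ≤ 1`.
-/

open Finset

section Words

variable {ι : Type*} [Fintype ι] [DecidableEq ι]

theorem sum_pow_card_filter_true {R : Type*} [CommSemiring R] (t : R) :
    ∑ w : ι → Bool, t ^ #{j | w j = true} = (1 + t) ^ Fintype.card ι := by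
  calc ∑ w : ι → Bool, t ^ #{j | w j = true}
      = ∑ w : ι → Bool, ∏ j, if w j = true then t else 1 := by
        simp only [← prod_filter, prod_const]
    _ = ∏ _j : ι, ∑ b : Bool, if b = true then t else 1 :=
        (Fintype.prod_sum fun _ b => if b = true then t else 1).symm
    _ = (1 + t) ^ Fintype.card ι := by simp [add_comm]

theorem card_mul_rpow_le_of_card_filter_true_le {S : Finset (ι → Bool)} {t m : ℝ}
    (ht0 : 0 < t) (ht1 : t ≤ 1) (hS : ∀ w ∈ S, (#{j | w j = true} : ℝ) ≤ m) :
    #S * t ^ m ≤ (1 + t) ^ Fintype.card ι := by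
  calc #S * t ^ m = ∑ _w ∈ S, t ^ m := by rw [sum_const, nsmul_eq_mul]
    _ ≤ ∑ w ∈ S, t ^ #{j | w j = true} := by
        gcongr with w hw
        rw [← Real.rpow_natCast]
        exact Real.rpow_le_rpow_of_exponent_ge ht0 ht1 (hS w hw)
    _ ≤ ∑ w : ι → Bool, t ^ #{j | w j = true} :=
        sum_le_univ_sum_of_nonneg fun _ => by positivity
    _ = (1 + t) ^ Fintype.card ι := sum_pow_card_filter_true t

theorem natCard_le_exp_of_card_filter_true_le {S : Set (ι → Bool)} {α : ℝ}
    (hα0 : 0 < α) (hα1 : α ≤ 1) (hS : ∀ w ∈ S, (#{j | w j = true} : ℝ) ≤ α * Fintype.card ι) :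
    (Nat.card S : ℝ) ≤ Real.exp (2 * √α * Fintype.card ι) := by
  classical
  set t := √α
  set n : ℝ := (Fintype.card ι : ℝ)
  have ht0 : 0 < t := Real.sqrt_pos.2 hα0
  have ht1 : t ≤ 1 := Real.sqrt_le_one.2 hα1
  have htt : t * t = α := Real.mul_self_sqrt hα0.le
  have hlog : -(α * Real.log t) ≤ t := by
    have hlog_inv := Real.log_le_sub_one_of_pos (inv_pos.2 ht0)
    rw [Real.log_inv] at hlog_inv
    have hαt : α * t⁻¹ = t := by rw [← htt]; field_simp
    nlinarith
  have hpow : (1 + t) ^ Fintype.card ι ≤ Real.exp (t * n) := by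
    rw [Real.exp_mul, ← Real.rpow_natCast, add_comm]
    gcongr
    exact Real.add_one_le_exp t
  have hrpow : Real.exp (-(t * n)) ≤ t ^ (α * n) := by
    rw [Real.rpow_def_of_pos ht0, Real.exp_le_exp]
    nlinarith [mul_le_mul_of_nonneg_right hlog (Nat.cast_nonneg (Fintype.card ι) : (0 : ℝ) ≤ n)]
  have hcard := card_mul_rpow_le_of_card_filter_true_le ht0 ht1
    (S := S.toFinset) (m := α * n) (by simpa using hS)
  rw [Nat.card_eq_card_toFinset]
  refine le_of_mul_le_mul_right (hcard.trans (hpow.trans ?_)) (Real.rpow_pos_of_pos ht0 _)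
  calc Real.exp (t * n) = Real.exp (2 * t * n) * Real.exp (-(t * n)) := by
        rw [← Real.exp_add]; ring_nf
    _ ≤ Real.exp (2 * t * n) * t ^ (α * n) := by gcongr

end Words

theorem card_filter_true_le_of_blocks {k N : ℕ} {x : ℝ} (w : Fin (k * N) → Bool)
    (hw : ∀ ℓ : Fin k, (#{j : Fin (k * N) |
      (ℓ : ℕ) * N ≤ (j : ℕ) ∧ (j : ℕ) < ((ℓ : ℕ) + 1) * N ∧ w j = true} : ℝ) ≤ x) :
    (#{j | w j = true} : ℝ) ≤ k * x := by
  have hcover : #{j | w j = true} ≤ ∑ ℓ : Fin k, #{j : Fin (k * N) |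
      (ℓ : ℕ) * N ≤ (j : ℕ) ∧ (j : ℕ) < ((ℓ : ℕ) + 1) * N ∧ w j = true} := by
    refine (card_le_card fun j hj => ?_).trans card_biUnion_le
    have hN : 0 < N := Nat.pos_of_mul_pos_left (Nat.zero_lt_of_lt j.2)
    simp only [mem_filter, mem_univ, true_and, mem_biUnion] at hj ⊢
    have hj_lt : (j : ℕ) < N * k := mul_comm k N ▸ j.2
    refine ⟨⟨j / N, Nat.div_lt_of_lt_mul hj_lt⟩, Nat.div_mul_le_self _ _, ?_, hj⟩
    exact (Nat.div_lt_iff_lt_mul hN).1 (Nat.lt_succ_self _)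
  calc (#{j | w j = true} : ℝ) ≤ ∑ ℓ : Fin k, (#{j : Fin (k * N) |
        (ℓ : ℕ) * N ≤ (j : ℕ) ∧ (j : ℕ) < ((ℓ : ℕ) + 1) * N ∧ w j = true} : ℝ) := by
        exact_mod_cast hcover
    _ ≤ ∑ _ℓ : Fin k, x := sum_le_sum fun ℓ _ => hw ℓ
    _ = k * x := by simp

/-- Letters are encoded as `Bool`, with `true` standing for the letter `1`. -/
theorem count_uncontrolled_words (α : ℝ) (hα : α ∈ Set.Ioo (0:ℝ) 1) :
    ∃ C > 0, ∀ ρ : ℝ, ρ ∈ Set.Ioc (0:ℝ) 1 → ∀ h : ℝ, h ∈ Set.Ioo (0:ℝ) 1 →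
      ∀ N₀ : ℕ, N₀ = ⌈(ρ / 4) * Real.log (1 / h)⌉₊ →
        (Nat.card {w : Fin (8 * N₀) → Bool |
            ∀ ℓ : Fin 8, ((Finset.univ.filter (fun j : Fin (8 * N₀) =>
              (ℓ : ℕ) * N₀ ≤ (j : ℕ) ∧ (j : ℕ) < ((ℓ : ℕ) + 1) * N₀ ∧
                w j = true)).card : ℝ) < α * N₀} : ℝ)
          ≤ C * h ^ (-(4 * Real.sqrt α)) := by
  obtain ⟨hα0, hα1⟩ := hα
  refine ⟨Real.exp (16 * √α), Real.exp_pos _, ?_⟩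
  rintro ρ ⟨hρ0, hρ1⟩ h ⟨hh0, hh1⟩ N₀ hN₀
  set L := Real.log (1 / h) with hL_def
  have hL : 0 < L := Real.log_pos ((one_lt_div hh0).2 hh1)
  have hlength : ((8 * N₀ : ℕ) : ℝ) ≤ 2 * L + 8 := by
    have := hN₀ ▸ Nat.ceil_lt_add_one (by positivity : 0 ≤ ρ / 4 * L)
    push_cast
    nlinarith
  refine (natCard_le_exp_of_card_filter_true_le hα0 hα1.le fun w hw => ?_).trans ?_
  · calc (#{j | w j = true} : ℝ) ≤ 8 * (α * N₀) :=
          card_filter_true_le_of_blocks w fun ℓ => (hw ℓ).le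
      _ = α * Fintype.card (Fin (8 * N₀)) := by push_cast [Fintype.card_fin]; ring
  · calc Real.exp (2 * √α * Fintype.card (Fin (8 * N₀)))
        ≤ Real.exp (2 * √α * (2 * L + 8)) := by
          rw [Fintype.card_fin]; gcongr
      _ = Real.exp (16 * √α) * h ^ (-(4 * √α)) := by
          rw [Real.rpow_def_of_pos hh0, ← Real.exp_add, show Real.log h = -L by
            rw [hL_def, one_div, Real.log_inv, neg_neg]]
          ring_nf
end

section
/- Let H be a complex Hilbert space, let P : H → H be a bounded self-adjoint operator, and let h > 0 and t ∈ ℝ. Define the unitary propagator U(t) := exp(−(it/h) P) (the operator exponential of −(it/h)P). Then for every u ∈ H one has ‖U(t)u − e^{−it/h} u‖ ≤ (|t|/h) ‖P u − u‖, where e^{−it/h} ∈ ℂ is the scalar complex exponential. -/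
/-!
Splitting off the scalar part, `exp (z • P) = e^z • exp (z • (P - 1))` with `z = -(it/h)`, and
`|e^z| = 1`. For self-adjoint `A`, the curve `s ↦ exp (i s A) u` has derivative
`i exp (i s A) (A u)`, of norm `‖A u‖` because `exp (i s A)` is unitary; the mean value inequality
then bounds `‖exp (i s A) u - u‖` by `|s| ‖A u‖`. Apply this to `A = P - 1`.
-/

open NormedSpace

section BanachAlgebra

variable {A : Type*} [NormedRing A] [NormedAlgebra ℂ A] [CompleteSpace A]

theorem exp_smul_eq_cexp_smul_exp_smul_sub_one (z : ℂ) (a : A) :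
    exp (z • a) = Complex.exp z • exp (z • (a - 1)) := by
  let +nondep : NormedAlgebra ℚ A := .restrictScalars ℚ ℂ A
  have hsplit : z • a = algebraMap ℂ A z + z • (a - 1) := by
    rw [Algebra.algebraMap_eq_smul_one, ← smul_add, add_sub_cancel]
  rw [hsplit, exp_add_of_commute (Algebra.commutes z _), ← algebraMap_exp_comm,
    ← Complex.exp_eq_exp_ℂ, ← Algebra.smul_def]

theorem IsSelfAdjoint.exp_ofReal_mul_I_smul_mem_unitary [StarRing A] [ContinuousStar A]
    [StarModule ℂ A] {a : A} (ha : IsSelfAdjoint a) (s : ℝ) :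
    NormedSpace.exp (((s : ℂ) * Complex.I) • a) ∈ unitary A := by
  rw [mul_comm, mul_smul]
  exact (selfAdjoint.expUnitary ⟨(s : ℂ) • a, IsSelfAdjoint.smul (Complex.conj_ofReal s) ha⟩).2

end BanachAlgebra

theorem hasDerivAt_exp_ofReal_mul_I_smul_apply {E : Type*} [NormedAddCommGroup E]
    [NormedSpace ℂ E] [CompleteSpace E] (T : E →L[ℂ] E) (u : E) (s : ℝ) :
    HasDerivAt (fun s : ℝ => NormedSpace.exp (((s : ℂ) * Complex.I) • T) u)
      (Complex.I • NormedSpace.exp (((s : ℂ) * Complex.I) • T) (T u)) s := by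
  have hpath : HasDerivAt (fun s : ℝ => (s : ℂ) * Complex.I) Complex.I s := by
    simpa using (Complex.ofRealCLM.hasDerivAt (x := s)).mul_const Complex.I
  have hexp := (ContinuousLinearMap.apply ℂ E u).hasFDerivAt.comp_hasDerivAt _
    (hasDerivAt_exp_smul_const T ((s : ℂ) * Complex.I))
  exact hexp.scomp s hpath

theorem IsSelfAdjoint.norm_exp_ofReal_mul_I_smul_apply_sub_le {H : Type*}
    [NormedAddCommGroup H] [InnerProductSpace ℂ H] [CompleteSpace H] {T : H →L[ℂ] H}
    (hT : IsSelfAdjoint T) (s : ℝ) (u : H) :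
    ‖NormedSpace.exp (((s : ℂ) * Complex.I) • T) u - u‖ ≤ |s| * ‖T u‖ := by
  have hbound (σ : ℝ) :
      ‖Complex.I • NormedSpace.exp (((σ : ℂ) * Complex.I) • T) (T u)‖ ≤ ‖T u‖ := by
    rw [norm_smul, Complex.norm_I, one_mul,
      ContinuousLinearMap.norm_map_of_mem_unitary (hT.exp_ofReal_mul_I_smul_mem_unitary σ)]
  have hmvt := Convex.norm_image_sub_le_of_norm_hasDerivWithin_le
    (fun σ _ => (hasDerivAt_exp_ofReal_mul_I_smul_apply T u σ).hasDerivWithinAt)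
    (fun σ _ => hbound σ) convex_univ (Set.mem_univ 0) (Set.mem_univ s)
  simpa [mul_comm] using hmvt

/-- **Propagator applied to an approximate eigenfunction is close to a scalar phase**
(key estimate in Lemma 2.2 of the paper).  Let `H` be a complex Hilbert space,
`P : H → H` a bounded self-adjoint operator, `h > 0`, `t ∈ ℝ`, and
`U(t) = exp (-(i t / h) P)`.  Then for every `u ∈ H`,
`‖U(t) u - e^{-it/h} u‖ ≤ (|t|/h) ‖P u - u‖`. -/
theorem propagator_close_to_phase
    {H : Type*} [NormedAddCommGroup H] [InnerProductSpace ℂ H] [CompleteSpace H]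
    (P : H →L[ℂ] H) (hP : IsSelfAdjoint P)
    (h t : ℝ) (hh : 0 < h) (u : H) :
    ‖(NormedSpace.exp (((-(t / h) : ℂ) * Complex.I) • P)) u
        - Complex.exp ((-(t / h) : ℂ) * Complex.I) • u‖
      ≤ (|t| / h) * ‖P u - u‖ := by
  have hcast : (-(t / h) : ℂ) = ((-(t / h) : ℝ) : ℂ) := by push_cast; rfl
  rw [hcast, exp_smul_eq_cexp_smul_exp_smul_sub_one, smul_apply, ← smul_sub,
    norm_smul, Complex.norm_exp_ofReal_mul_I, one_mul]
  calc _ ≤ |-(t / h)| * ‖(P - 1) u‖ :=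
        (hP.sub (.one _)).norm_exp_ofReal_mul_I_smul_apply_sub_le _ u
    _ = (|t| / h) * ‖P u - u‖ := by
      rw [abs_neg, abs_div, abs_of_pos hh, sub_apply, one_apply_eq_self]
end

section
/- Let H be a complex Hilbert space, let P : H → H be a bounded self-adjoint operator, let A : H → H be a bounded operator, and let h > 0 and t ∈ ℝ. Define U(t) := exp(−(it/h) P). Then for every u ∈ H one has ‖A U(t) u‖ ≤ ‖A u‖ + (‖A‖ |t| / h) ‖P u − u‖, where ‖A‖ denotes the operator norm of A. -/
/-!
Write `U = exp (-(i t / h) P) = e^{-i t / h} exp M` with `M = -(i t / h) (P - 1)` skew-adjoint.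
Every `exp (τ M)`, `τ` real, is unitary, so the path `τ ↦ exp (τ M) u` has speed `‖M u‖` and
the mean value inequality gives `‖U u - e^{-i t / h} u‖ ≤ (|t| / h) ‖P u - u‖`. The phase does
not change `‖A u‖`, and the triangle inequality concludes.
-/

open NormedSpace

theorem hasDerivAt_exp_smul_apply {E : Type*} [NormedAddCommGroup E] [NormedSpace ℂ E]
    [CompleteSpace E] (M : E →L[ℂ] E) (u : E) (x : ℝ) :
    HasDerivAt (fun y : ℝ => exp (y • M) u) (exp (x • M) (M u)) x := by
  simpa [Function.comp_def] using
    ((ContinuousLinearMap.apply ℂ E u).restrictScalars ℝ).hasFDerivAt.comp_hasDerivAt x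
      (hasDerivAt_exp_smul_const M x)

section HilbertSpace

variable {H : Type*} [NormedAddCommGroup H] [InnerProductSpace ℂ H] [CompleteSpace H]

theorem norm_exp_apply_of_mem_skewAdjoint {M : H →L[ℂ] H} (hM : M ∈ skewAdjoint (H →L[ℂ] H))
    (v : H) : ‖exp M v‖ = ‖v‖ := by
  let +nondep : NormedAlgebra ℚ (H →L[ℂ] H) := .restrictScalars ℚ ℂ _
  have hU : exp M ∈ unitary (H →L[ℂ] H) := exp_mem_unitary_of_mem_skewAdjoint hM
  exact ContinuousLinearMap.norm_map_of_mem_unitary hU v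

theorem norm_exp_apply_sub_self_le_of_mem_skewAdjoint {M : H →L[ℂ] H}
    (hM : M ∈ skewAdjoint (H →L[ℂ] H)) (u : H) : ‖exp M u - u‖ ≤ ‖M u‖ := by
  simpa using (convex_Icc (0 : ℝ) 1).norm_image_sub_le_of_norm_hasDerivWithin_le
    (fun x _ => (hasDerivAt_exp_smul_apply M u x).hasDerivWithinAt)
    (fun x _ => (norm_exp_apply_of_mem_skewAdjoint (skewAdjoint.smul_mem x hM) (M u)).le)
    (Set.left_mem_Icc.mpr zero_le_one) (Set.right_mem_Icc.mpr zero_le_one)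

theorem IsSelfAdjoint.norm_exp_smul_apply_sub_exp_smul_le {P : H →L[ℂ] H}
    (hP : IsSelfAdjoint P) (s μ : ℝ) (u : H) :
    ‖NormedSpace.exp (((s : ℂ) * Complex.I) • P) u - Complex.exp (↑(s * μ) * Complex.I) • u‖
      ≤ |s| * ‖P u - (μ : ℂ) • u‖ := by
  let +nondep : NormedAlgebra ℚ (H →L[ℂ] H) := .restrictScalars ℚ ℂ _
  set c : ℂ := s * Complex.I
  set M : H →L[ℂ] H := c • (P - algebraMap ℂ _ μ)
  have hc : c ∈ skewAdjoint ℂ := by simp [c, skewAdjoint.mem_iff]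
  have hM : M ∈ skewAdjoint (H →L[ℂ] H) :=
    (hP.sub (.algebraMap _ (Complex.conj_ofReal μ))).smul_mem_skewAdjoint hc
  have hsplit :
      NormedSpace.exp (c • P) = algebraMap ℂ _ (NormedSpace.exp (c * μ)) * NormedSpace.exp M := by
    rw [algebraMap_exp_comm, ← exp_add_of_commute (Algebra.commutes _ _)]
    congr 1
    simp only [M]
    rw [smul_sub, Algebra.smul_def c (algebraMap ℂ _ μ), ← map_mul]
    abel
  have hphase : NormedSpace.exp (c * μ) = Complex.exp (↑(s * μ) * Complex.I) := by
    rw [← Complex.exp_eq_exp_ℂ]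
    simp only [c]
    push_cast
    ring_nf
  calc ‖NormedSpace.exp (c • P) u - Complex.exp (↑(s * μ) * Complex.I) • u‖
      = ‖NormedSpace.exp M u - u‖ := by
        rw [hsplit, mul_apply_eq_comp, ContinuousLinearMap.algebraMap_apply, hphase,
          ← smul_sub, norm_smul, Complex.norm_exp_ofReal_mul_I, one_mul]
    _ ≤ ‖M u‖ := norm_exp_apply_sub_self_le_of_mem_skewAdjoint hM u
    _ = |s| * ‖P u - (μ : ℂ) • u‖ := by
        simp [M, c, norm_smul, Algebra.algebraMap_eq_smul_one]

end HilbertSpace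

/-- **Control of propagated states** (abstract content of Lemma 2.2 of the paper).
Let `H` be a complex Hilbert space, `P : H → H` a bounded self-adjoint operator,
`A : H → H` a bounded operator, `h > 0`, `t ∈ ℝ`, and `U(t) = exp (-(i t / h) P)`.
Then for every `u ∈ H`,
`‖A (U(t) u)‖ ≤ ‖A u‖ + (‖A‖ |t| / h) ‖P u - u‖`. -/
theorem control_of_propagated_state
    {H : Type*} [NormedAddCommGroup H] [InnerProductSpace ℂ H] [CompleteSpace H]
    (P : H →L[ℂ] H) (hP : IsSelfAdjoint P) (A : H →L[ℂ] H)
    (h t : ℝ) (hh : 0 < h) (u : H) :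
    ‖A ((NormedSpace.exp (((-(t / h) : ℂ) * Complex.I) • P)) u)‖
      ≤ ‖A u‖ + (‖A‖ * |t| / h) * ‖P u - u‖ := by
  set s : ℝ := -(t / h)
  have hs : (-(t / h) : ℂ) = s := by push_cast [s]; rfl
  have hs_abs : |s| = |t| / h := by rw [abs_neg, abs_div, abs_of_pos hh]
  set ζ : ℂ := Complex.exp (s * Complex.I)
  set v : H := exp (((s : ℂ) * Complex.I) • P) u
  have hv : ‖v - ζ • u‖ ≤ |s| * ‖P u - u‖ := by
    simpa using hP.norm_exp_smul_apply_sub_exp_smul_le s 1 u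
  have hζ : ‖A (ζ • u)‖ = ‖A u‖ := by
    rw [map_smul, norm_smul, Complex.norm_exp_ofReal_mul_I, one_mul]
  rw [hs]
  calc ‖A v‖ = ‖A (ζ • u) + A (v - ζ • u)‖ := by rw [← map_add, add_sub_cancel]
    _ ≤ ‖A u‖ + ‖A‖ * ‖v - ζ • u‖ := by
        rw [← hζ]
        exact (norm_add_le _ _).trans (add_le_add_right (A.le_opNorm _) _)
    _ ≤ ‖A u‖ + ‖A‖ * (|s| * ‖P u - u‖) := by gcongr
    _ = ‖A u‖ + (‖A‖ * |t| / h) * ‖P u - u‖ := by rw [hs_abs]; ring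
end

section
/- Let n ≥ 1, let 0 ≤ ρ' ≤ ρ, let K ⊂ ℝⁿ × ℝⁿ be compact, and for each pair of multi-indices (α', β') let C_{α'β'} > 0 be given. Then for every ε > 0 and every pair of multi-indices (α, β) there exists a constant C' > 0 such that the following holds. For every h ∈ (0,1), every integer N with 1 ≤ N ≤ log(1/h), and all smooth functions a_1, …, a_N : ℝⁿ × ℝⁿ → ℂ (in variables (y,η)) such that each a_j is supported in K, satisfies sup |a_j| ≤ 1, and satisfies sup |∂_y^{α'} ∂_η^{β'} a_j| ≤ C_{α'β'} h^{−ρ|α'| − ρ'|β'|} for all multi-indices (α', β'), the product satisfies sup |∂_y^{α} ∂_η^{β} (a_1 a_2 ⋯ a_N)| ≤ C' h^{−ρ|α| − ρ'|β| − ε}. -/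
/-- The partial derivative of `f : ℝⁿ × ℝⁿ → ℂ` in the `i`-th coordinate direction:
`Sum.inl j` is the `j`-th direction in the first (`y`) group of variables and
`Sum.inr j` the `j`-th direction in the second (`η`) group. -/
noncomputable def pderiv1 {n : ℕ} (i : Fin n ⊕ Fin n)
    (f : ((Fin n → ℝ) × (Fin n → ℝ)) → ℂ) :
    ((Fin n → ℝ) × (Fin n → ℝ)) → ℂ := fun p =>
  fderiv ℝ f p
    (Sum.elim (fun j => (Pi.single j 1, 0)) (fun j => (0, Pi.single j 1)) i)

/-- Iterated partial derivatives `∂_y^α ∂_η^β` along the list of coordinate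
directions `l` (multi-indices are encoded as lists of directions; the number of
`y`-derivatives is `l.countP Sum.isLeft` and the number of `η`-derivatives is
`l.countP Sum.isRight`). -/
noncomputable def pderivs {n : ℕ} (l : List (Fin n ⊕ Fin n))
    (f : ((Fin n → ℝ) × (Fin n → ℝ)) → ℂ) :
    ((Fin n → ℝ) × (Fin n → ℝ)) → ℂ :=
  l.foldr pderiv1 f

namespace PMS

set_option linter.unnecessarySeqFocus false

lemma contDiff_pderiv1 {i : Fin n ⊕ Fin n} {f : ((Fin n → ℝ) × (Fin n → ℝ)) → ℂ}
    (hf : ContDiff ℝ (⊤ : ℕ∞) f) : ContDiff ℝ (⊤ : ℕ∞) (pderiv1 i f) := by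
  exact (hf.fderiv_right (le_refl _)).clm_apply contDiff_const

lemma contDiff_pderivs {l : List (Fin n ⊕ Fin n)} {f : ((Fin n → ℝ) × (Fin n → ℝ)) → ℂ}
    (hf : ContDiff ℝ (⊤ : ℕ∞) f) : ContDiff ℝ (⊤ : ℕ∞) (pderivs l f) := by
  induction l with
  | nil => exact hf
  | cons i l ih => exact contDiff_pderiv1 ih

lemma pderivs_cons (i : Fin n ⊕ Fin n) (l : List (Fin n ⊕ Fin n)) (f) :
    pderivs (i :: l) f = pderiv1 i (pderivs l f) := rfl

lemma pderiv1_add {i : Fin n ⊕ Fin n} {u v : ((Fin n → ℝ) × (Fin n → ℝ)) → ℂ}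
    (hu : ContDiff ℝ (⊤ : ℕ∞) u) (hv : ContDiff ℝ (⊤ : ℕ∞) v) :
    pderiv1 i (fun q => u q + v q) = fun q => pderiv1 i u q + pderiv1 i v q := by
  funext q
  unfold pderiv1
  rw [fderiv_fun_add (hu.differentiable (by simp) q)
      (hv.differentiable (by simp) q)]
  simp

lemma pderiv1_mul {i : Fin n ⊕ Fin n} {u v : ((Fin n → ℝ) × (Fin n → ℝ)) → ℂ}
    (hu : ContDiff ℝ (⊤ : ℕ∞) u) (hv : ContDiff ℝ (⊤ : ℕ∞) v) :
    pderiv1 i (fun q => u q * v q) = fun q => pderiv1 i u q * v q + u q * pderiv1 i v q := by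
  funext q
  unfold pderiv1
  rw [fderiv_fun_mul (hu.differentiable (by simp) q)
      (hv.differentiable (by simp) q)]
  simp [smul_eq_mul]
  ring


variable {n : ℕ}

abbrev Pt (n : ℕ) := (Fin n → ℝ) × (Fin n → ℝ)

/-- all ways to split a list of derivative directions between two factors -/
def splits : List (Fin n ⊕ Fin n) → List (List (Fin n ⊕ Fin n) × List (Fin n ⊕ Fin n))
  | [] => [([], [])]
  | i :: l => ((splits l).map fun s => (i :: s.1, s.2))
      ++ ((splits l).map fun s => (s.1, i :: s.2))

lemma splits_countP (p : (Fin n ⊕ Fin n) → Bool) :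
    ∀ (l : List (Fin n ⊕ Fin n)), ∀ s ∈ splits l,
      s.1.countP p + s.2.countP p = l.countP p := by
  intro l
  induction l with
  | nil => intro s hs; simp [splits] at hs; simp [hs]
  | cons i l ih =>
    intro s hs
    simp only [splits, List.mem_append, List.mem_map] at hs
    rcases hs with ⟨t, ht, rfl⟩ | ⟨t, ht, rfl⟩ <;>
      simp [List.countP_cons, ← ih t ht] <;> split <;> omega

lemma splits_length : ∀ (l : List (Fin n ⊕ Fin n)), ∀ s ∈ splits l,
    s.1.length + s.2.length = l.length := by
  intro l
  induction l with
  | nil => intro s hs; simp [splits] at hs; simp [hs]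
  | cons i l ih =>
    intro s hs
    simp only [splits, List.mem_append, List.mem_map] at hs
    rcases hs with ⟨t, ht, rfl⟩ | ⟨t, ht, rfl⟩ <;> simp [← ih t ht] <;> omega

lemma splits_fst_nil : ∀ (l : List (Fin n ⊕ Fin n)), ∀ s ∈ splits l,
    s.1 = [] → s.2 = l := by
  intro l
  induction l with
  | nil => intro s hs _; simp [splits] at hs; simp [hs]
  | cons i l ih =>
    intro s hs h1
    simp only [splits, List.mem_append, List.mem_map] at hs
    rcases hs with ⟨t, ht, rfl⟩ | ⟨t, ht, rfl⟩
    · simp at h1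
    · simp at h1 ⊢; exact ih t ht h1

lemma splits_count_nil : ∀ (l : List (Fin n ⊕ Fin n)),
    (splits l).countP (fun s => s.1.isEmpty) = 1 := by
  intro l
  induction l with
  | nil => simp [splits]
  | cons i l ih =>
    simp only [splits, List.countP_append, List.countP_map]
    have h1 : List.countP ((fun s => s.1.isEmpty) ∘ fun s => (i :: s.1, s.2)) (splits l) = 0 := by
      apply List.countP_eq_zero.2; intro s hs; simp
    have h2 : List.countP ((fun s => s.1.isEmpty) ∘ fun s => (s.1, i :: s.2)) (splits l) = 1 := by
      rw [← ih]; rfl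
    omega


variable {n : ℕ}

lemma contDiff_list_sum {ι : Type*} (L : List ι) (F : ι → Pt n → ℂ)
    (hF : ∀ s ∈ L, ContDiff ℝ (⊤ : ℕ∞) (F s)) :
    ContDiff ℝ (⊤ : ℕ∞) (fun q => (L.map fun s => F s q).sum) := by
  induction L with
  | nil => simpa using contDiff_const
  | cons a L ih =>
    simp only [List.map_cons, List.sum_cons]
    exact (hF a (by simp)).add (ih fun s hs => hF s (by simp [hs]))

lemma pderiv1_list_sum {ι : Type*} (i : Fin n ⊕ Fin n) (L : List ι) (F : ι → Pt n → ℂ)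
    (hF : ∀ s ∈ L, ContDiff ℝ (⊤ : ℕ∞) (F s)) :
    pderiv1 i (fun q => (L.map fun s => F s q).sum)
      = fun q => (L.map fun s => pderiv1 i (F s) q).sum := by
  induction L with
  | nil =>
    funext q
    simp only [List.map_nil, List.sum_nil, pderiv1]
    rw [fderiv_const_apply]
    simp
  | cons a L ih =>
    have hL : ∀ s ∈ L, ContDiff ℝ (⊤ : ℕ∞) (F s) := fun s hs => hF s (by simp [hs])
    funext q
    simp only [List.map_cons, List.sum_cons]
    rw [show (fun q => F a q + (L.map fun s => F s q).sum)
        = (fun q => F a q + (fun q' => (L.map fun s => F s q').sum) q) from rfl]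
    rw [pderiv1_add (hF a (by simp)) (contDiff_list_sum L F hL), ih hL]

lemma pderivs_mul (l : List (Fin n ⊕ Fin n)) (f g : Pt n → ℂ)
    (hf : ContDiff ℝ (⊤ : ℕ∞) f) (hg : ContDiff ℝ (⊤ : ℕ∞) g) :
    pderivs l (fun q => f q * g q)
      = fun q => ((splits l).map fun s => pderivs s.1 f q * pderivs s.2 g q).sum := by
  induction l with
  | nil => funext q; simp [splits, pderivs]
  | cons i l ih =>
    funext q
    rw [pderivs_cons, ih]
    rw [pderiv1_list_sum i (splits l) (fun s q' => pderivs s.1 f q' * pderivs s.2 g q')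
      (fun s _ => (contDiff_pderivs hf).mul (contDiff_pderivs hg))]
    simp only [splits, List.map_append, List.sum_append, List.map_map]
    have hmap : (splits l).map (fun s => pderiv1 i (fun q' => pderivs s.1 f q' * pderivs s.2 g q') q)
        = (splits l).map (fun s => pderivs (i :: s.1) f q * pderivs s.2 g q
            + pderivs s.1 f q * pderivs (i :: s.2) g q) := by
      apply List.map_congr_left
      intro s _
      rw [pderiv1_mul (contDiff_pderivs hf) (contDiff_pderivs hg)]
      rfl
    rw [hmap, List.sum_map_add]
    rfl

variable {n : ℕ}

lemma list_norm_sum_le {ι : Type*} (L : List ι) (F : ι → ℂ) :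
    ‖(L.map F).sum‖ ≤ (L.map fun s => ‖F s‖).sum := by
  induction L with
  | nil => simp
  | cons a L ih =>
    simp only [List.map_cons, List.sum_cons]
    exact (norm_add_le _ _).trans (by linarith)

lemma list_sum_map_ite {ι : Type*} (L : List ι) (p : ι → Bool) (c : ℝ) :
    (L.map fun s => if p s then c else 0).sum = (L.countP p : ℝ) * c := by
  induction L with
  | nil => simp
  | cons a L ih =>
    simp only [List.map_cons, List.sum_cons, List.countP_cons, ih]
    by_cases hpa : p a <;> simp [hpa] <;> ring

lemma contDiff_prod_univ : ∀ (N : ℕ) (a : Fin N → Pt n → ℂ), (∀ j, ContDiff ℝ (⊤ : ℕ∞) (a j)) →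
    ContDiff ℝ (⊤ : ℕ∞) (fun q => ∏ j, a j q) := by
  intro N
  induction N with
  | zero => intro a _; simpa using contDiff_const
  | succ N ih =>
    intro a ha
    have : (fun q => ∏ j, a j q) = fun q => a 0 q * ∏ j : Fin N, a j.succ q :=
      funext fun q => Fin.prod_univ_succ _
    rw [this]
    exact (ha 0).mul (ih _ fun j => ha j.succ)

noncomputable def expo (ρ ρ' : ℝ) (l : List (Fin n ⊕ Fin n)) : ℝ :=
  -(ρ * (l.countP Sum.isLeft : ℕ) + ρ' * (l.countP Sum.isRight : ℕ))

lemma expo_split (ρ ρ' : ℝ) (l : List (Fin n ⊕ Fin n)) (s) (hs : s ∈ splits l) :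
    expo ρ ρ' s.1 + expo ρ ρ' s.2 = expo ρ ρ' l := by
  unfold expo
  have h1 := splits_countP Sum.isLeft l s hs
  have h2 := splits_countP Sum.isRight l s hs
  have c1 : ((s.1.countP Sum.isLeft : ℝ)) + (s.2.countP Sum.isLeft : ℝ)
      = (l.countP Sum.isLeft : ℝ) := by exact_mod_cast congrArg (Nat.cast (R := ℝ)) h1
  have c2 : ((s.1.countP Sum.isRight : ℝ)) + (s.2.countP Sum.isRight : ℝ)
      = (l.countP Sum.isRight : ℝ) := by exact_mod_cast congrArg (Nat.cast (R := ℝ)) h2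
  rw [← c1, ← c2]; ring

lemma key (ρ ρ' : ℝ) (C : List (Fin n ⊕ Fin n) → ℝ) (hC : ∀ l, 0 < C l) :
    ∀ (l : List (Fin n ⊕ Fin n)), ∃ D, 0 < D ∧
      ∀ (h : ℝ), 0 < h → h < 1 → ∀ (N : ℕ), 1 ≤ N →
      ∀ a : Fin N → Pt n → ℂ, (∀ j, ContDiff ℝ (⊤ : ℕ∞) (a j)) →
        (∀ j p, ‖a j p‖ ≤ 1) →
        (∀ j l' p, ‖pderivs l' (a j) p‖ ≤ C l' * h ^ expo ρ ρ' l') →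
        ∀ p, ‖pderivs l (fun q => ∏ j, a j q) p‖
            ≤ D * (N : ℝ) ^ l.length * h ^ expo ρ ρ' l := by
  suffices H : ∀ m : ℕ, ∀ l : List (Fin n ⊕ Fin n), l.length < m → ∃ D, 0 < D ∧
      ∀ (h : ℝ), 0 < h → h < 1 → ∀ (N : ℕ), 1 ≤ N →
      ∀ a : Fin N → Pt n → ℂ, (∀ j, ContDiff ℝ (⊤ : ℕ∞) (a j)) →
        (∀ j p, ‖a j p‖ ≤ 1) →
        (∀ j l' p, ‖pderivs l' (a j) p‖ ≤ C l' * h ^ expo ρ ρ' l') →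
        ∀ p, ‖pderivs l (fun q => ∏ j, a j q) p‖
            ≤ D * (N : ℝ) ^ l.length * h ^ expo ρ ρ' l by
    exact fun l => H (l.length + 1) l (Nat.lt_succ_self _)
  intro m
  induction m with
  | zero => intro l hl; omega
  | succ m ih =>
    intro l hl
    by_cases hnil : l = []
    · refine ⟨1, one_pos, ?_⟩
      intro h h0 h1 N hN a hsm hb1 hb p
      subst hnil
      have hp0 : pderivs ([] : List (Fin n ⊕ Fin n)) (fun q => ∏ j, a j q) p
          = ∏ j, a j p := rfl
      rw [hp0]
      have : ‖∏ j, a j p‖ ≤ 1 := by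
        rw [norm_prod]
        exact Finset.prod_le_one (fun i _ => norm_nonneg _) (fun i _ => hb1 i p)
      have hE : expo ρ ρ' ([] : List (Fin n ⊕ Fin n)) = 0 := by simp [expo]
      rw [hE]
      simp only [List.length_nil, pow_zero, Real.rpow_zero]
      linarith
    · have hlen : 1 ≤ l.length := List.length_pos_iff.2 hnil
      -- constants for strictly shorter lists
      have H2 : ∀ l' : List (Fin n ⊕ Fin n), ∃ D₂, 0 < D₂ ∧
          (l'.length < l.length →
            ∀ (h : ℝ), 0 < h → h < 1 → ∀ (N : ℕ), 1 ≤ N →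
            ∀ a : Fin N → Pt n → ℂ, (∀ j, ContDiff ℝ (⊤ : ℕ∞) (a j)) →
              (∀ j p, ‖a j p‖ ≤ 1) →
              (∀ j l'' p, ‖pderivs l'' (a j) p‖ ≤ C l'' * h ^ expo ρ ρ' l'') →
              ∀ p, ‖pderivs l' (fun q => ∏ j, a j q) p‖
                  ≤ D₂ * (N : ℝ) ^ l'.length * h ^ expo ρ ρ' l') := by
        intro l'
        by_cases hl' : l'.length < l.length
        · obtain ⟨D₂, hD₂, hbnd⟩ := ih l' (by omega)
          exact ⟨D₂, hD₂, fun _ => hbnd⟩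
        · exact ⟨1, one_pos, fun h' => absurd h' hl'⟩
      choose D₂ hD₂pos hD₂ using H2
      set S : ℝ := ((splits l).map fun s => C s.1 * D₂ s.2).sum with hSdef
      have hS0 : 0 ≤ S := by
        apply List.sum_nonneg
        intro x hx
        simp only [List.mem_map] at hx
        obtain ⟨s, _, rfl⟩ := hx
        exact le_of_lt (mul_pos (hC s.1) (hD₂pos s.2))
      set D : ℝ := C l + S + 1 with hDdef
      have hD0 : 0 < D := by have := hC l; simp only [hDdef]; linarith
      have hSD : S ≤ D := by have := hC l; simp only [hDdef]; linarith
      refine ⟨D, hD0, ?_⟩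
      intro h h0 h1 N hN
      induction N, hN using Nat.le_induction with
      | base =>
        intro a hsm hb1 hb p
        have hpr : (fun q => ∏ j, a j q) = a 0 := funext fun q => Fin.prod_univ_one _
        rw [hpr]
        refine (hb 0 l p).trans ?_
        have hrp : (0:ℝ) < h ^ expo ρ ρ' l := Real.rpow_pos_of_pos h0 _
        have : C l ≤ D * ((1:ℕ) : ℝ) ^ l.length := by
          simp only [Nat.cast_one, one_pow, mul_one]
          have := hC l; linarith
        nlinarith
      | succ N hN1 ihN =>
        intro a hsm hb1 hb p
        have hprod : (fun q => ∏ j, a j q)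
            = fun q => a 0 q * (fun q' => ∏ j : Fin N, a j.succ q') q :=
          funext fun q => Fin.prod_univ_succ _
        set g : Pt n → ℂ := fun q => ∏ j : Fin N, a j.succ q with hgdef
        have hsmg : ContDiff ℝ (⊤ : ℕ∞) g := contDiff_prod_univ N _ fun j => hsm j.succ
        have hgN : ∀ l₂ p, l₂.length < l.length →
            ‖pderivs l₂ g p‖ ≤ D₂ l₂ * (N : ℝ) ^ l₂.length * h ^ expo ρ ρ' l₂ := by
          intro l₂ p hlt
          exact hD₂ l₂ hlt h h0 h1 N hN1 _ (fun j => hsm j.succ) (fun j p => hb1 j.succ p)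
            (fun j l'' p => hb j.succ l'' p) p
        rw [hprod, pderivs_mul l (a 0) g (hsm 0) hsmg]
        set E : ℝ := h ^ expo ρ ρ' l with hEdef
        have hE0 : 0 < E := Real.rpow_pos_of_pos h0 _
        set len := l.length with hlendef
        -- term-by-term bound
        have hterm : ∀ s ∈ splits l,
            ‖pderivs s.1 (a 0) p * pderivs s.2 g p‖
              ≤ (if s.1.isEmpty then D * (N:ℝ) ^ len * E else 0)
                + (if s.1.isEmpty then 0 else C s.1 * D₂ s.2 * ((N:ℝ) ^ (len - 1) * E)) := by
          intro s hs
          by_cases hs1 : s.1 = []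
          · have hs2 : s.2 = l := splits_fst_nil l s hs hs1
            rw [hs1, hs2]
            simp only [List.isEmpty_nil, if_true, add_zero]
            have h01 : ‖pderivs ([] : List (Fin n ⊕ Fin n)) (a 0) p‖ ≤ 1 := hb1 0 p
            have h02 : ‖pderivs l g p‖ ≤ D * (N:ℝ) ^ len * E :=
              ihN (fun j => a j.succ) (fun j => hsm j.succ) (fun j p => hb1 j.succ p)
                (fun j l'' p => hb j.succ l'' p) p
            rw [norm_mul]
            have hnn : 0 ≤ ‖pderivs l g p‖ := norm_nonneg _
            nlinarith
          · have hslen := splits_length l s hs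
            have hs1len : 1 ≤ s.1.length := List.length_pos_iff.2 hs1
            have hlt : s.2.length < len := by omega
            have hA : ‖pderivs s.1 (a 0) p‖ ≤ C s.1 * h ^ expo ρ ρ' s.1 := hb 0 s.1 p
            have hB : ‖pderivs s.2 g p‖ ≤ D₂ s.2 * (N:ℝ) ^ s.2.length * h ^ expo ρ ρ' s.2 :=
              hgN s.2 p hlt
            have hs1emp : s.1.isEmpty = false := by
              cases hs1' : s.1 with
              | nil => exact absurd hs1' hs1
              | cons x xs => rfl
            rw [hs1emp]
            simp only [Bool.false_eq_true, if_false, zero_add]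
            rw [norm_mul]
            have hNpow : (N:ℝ) ^ s.2.length ≤ (N:ℝ) ^ (len - 1) := by
              apply pow_le_pow_right₀
              · exact_mod_cast hN1
              · omega
            have hcomb : (C s.1 * h ^ expo ρ ρ' s.1) * (D₂ s.2 * (N:ℝ) ^ s.2.length * h ^ expo ρ ρ' s.2)
                ≤ C s.1 * D₂ s.2 * ((N:ℝ) ^ (len - 1) * E) := by
              have hhh : h ^ expo ρ ρ' s.1 * h ^ expo ρ ρ' s.2 = E := by
                rw [hEdef, ← Real.rpow_add h0, expo_split ρ ρ' l s hs]
              calc (C s.1 * h ^ expo ρ ρ' s.1) * (D₂ s.2 * (N:ℝ) ^ s.2.length * h ^ expo ρ ρ' s.2)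
                  = C s.1 * D₂ s.2 * ((N:ℝ) ^ s.2.length * (h ^ expo ρ ρ' s.1 * h ^ expo ρ ρ' s.2)) := by ring
                _ = C s.1 * D₂ s.2 * ((N:ℝ) ^ s.2.length * E) := by rw [hhh]
                _ ≤ C s.1 * D₂ s.2 * ((N:ℝ) ^ (len - 1) * E) := by
                    apply mul_le_mul_of_nonneg_left
                    · exact mul_le_mul_of_nonneg_right hNpow (le_of_lt hE0)
                    · exact le_of_lt (mul_pos (hC s.1) (hD₂pos s.2))
            refine le_trans ?_ hcomb
            apply mul_le_mul hA hB (norm_nonneg _)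
            exact le_of_lt (mul_pos (hC s.1) (Real.rpow_pos_of_pos h0 _))
        -- sum it all up
        refine le_trans (list_norm_sum_le (splits l) _) ?_
        refine le_trans (List.sum_le_sum hterm) ?_
        rw [List.sum_map_add, list_sum_map_ite (splits l) (fun s => s.1.isEmpty) (D * (N:ℝ) ^ len * E),
          splits_count_nil l]
        have hsum2 : ((splits l).map fun s =>
            if s.1.isEmpty then 0 else C s.1 * D₂ s.2 * ((N:ℝ) ^ (len - 1) * E)).sum
            ≤ S * ((N:ℝ) ^ (len - 1) * E) := by
          rw [hSdef, ← List.sum_map_mul_right]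
          apply List.sum_le_sum
          intro s _
          by_cases hse : s.1.isEmpty
          · rw [if_pos hse]
            have : 0 < (N:ℝ) ^ (len - 1) * E := by
              apply mul_pos _ hE0
              apply pow_pos
              exact_mod_cast Nat.lt_of_lt_of_le Nat.zero_lt_one hN1
            nlinarith [mul_pos (hC s.1) (hD₂pos s.2)]
          · rw [if_neg hse]
        have hN1R : (1:ℝ) ≤ (N:ℝ) := by exact_mod_cast hN1
        have hkey : D * (N:ℝ) ^ len + S * (N:ℝ) ^ (len - 1) ≤ D * ((N:ℝ) + 1) ^ len := by
          have e1 : ((N:ℝ) + 1) ^ len = ((N:ℝ) + 1) ^ (len - 1) * ((N:ℝ) + 1) := by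
            rw [← pow_succ]; congr 1; omega
          have e2 : (N:ℝ) ^ len = (N:ℝ) ^ (len - 1) * (N:ℝ) := by
            rw [← pow_succ]; congr 1; omega
          have e3 : (N:ℝ) ^ (len - 1) ≤ ((N:ℝ) + 1) ^ (len - 1) :=
            pow_le_pow_left₀ (by linarith) (by linarith) _
          have e4 : (0:ℝ) < (N:ℝ) ^ (len - 1) := pow_pos (by linarith) _
          rw [e1, e2]
          nlinarith [mul_le_mul_of_nonneg_right (mul_le_mul_of_nonneg_left e3 hD0.le)
              (by linarith : (0:ℝ) ≤ (N:ℝ) + 1),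
            mul_le_mul_of_nonneg_right hSD e4.le]
        calc (1:ℕ) * (D * (N:ℝ) ^ len * E)
              + ((splits l).map fun s =>
                  if s.1.isEmpty then 0 else C s.1 * D₂ s.2 * ((N:ℝ) ^ (len - 1) * E)).sum
            ≤ D * (N:ℝ) ^ len * E + S * ((N:ℝ) ^ (len - 1) * E) := by
              rw [Nat.cast_one, one_mul]
              linarith [hsum2]
          _ = (D * (N:ℝ) ^ len + S * (N:ℝ) ^ (len - 1)) * E := by ring
          _ ≤ (D * ((N:ℝ) + 1) ^ len) * E := by
              apply mul_le_mul_of_nonneg_right hkey (le_of_lt hE0)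
          _ = D * ((N + 1 : ℕ) : ℝ) ^ len * E := by push_cast; ring

lemma log_pow_le (x : ℝ) (hx : 1 ≤ x) (ε : ℝ) (hε : 0 < ε) (m : ℕ) :
    (Real.log x) ^ m ≤ (1 + m / ε) ^ m * x ^ ε := by
  have hx0 : 0 < x := lt_of_lt_of_le one_pos hx
  rcases Nat.eq_zero_or_pos m with rfl | hm
  · simpa using Real.one_le_rpow hx hε.le
  · set δ : ℝ := ε / m with hδdef
    have hm0 : (0:ℝ) < m := by exact_mod_cast hm
    have hδ : 0 < δ := div_pos hε hm0
    have hlog : Real.log x ≤ x ^ δ / δ := by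
      have h2 := Real.log_le_sub_one_of_pos (Real.rpow_pos_of_pos hx0 δ)
      rw [Real.log_rpow hx0] at h2
      rw [le_div_iff₀ hδ]
      nlinarith
    have hlog0 : 0 ≤ Real.log x := Real.log_nonneg hx
    calc (Real.log x) ^ m ≤ (x ^ δ / δ) ^ m := pow_le_pow_left₀ hlog0 hlog m
      _ = (δ⁻¹) ^ m * (x ^ δ) ^ m := by rw [div_eq_mul_inv, mul_pow]; ring
      _ ≤ (1 + m / ε) ^ m * x ^ ε := by
          have e1 : (x ^ δ) ^ m = x ^ ε := by
            rw [← Real.rpow_natCast (x ^ δ) m, ← Real.rpow_mul hx0.le]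
            congr 1
            rw [hδdef]
            exact div_mul_cancel₀ ε hm0.ne'
          rw [e1]
          apply mul_le_mul_of_nonneg_right _ (Real.rpow_pos_of_pos hx0 ε).le
          apply pow_le_pow_left₀ (inv_nonneg.2 hδ.le)
          rw [hδdef, inv_div]
          linarith

end PMS

/-- **Products of up to `log (1/h)` anisotropic symbols** (coordinate model of
Lemma A.1 of the paper).  Let `0 ≤ ρ' ≤ ρ`, `K ⊆ ℝⁿ × ℝⁿ` compact, and constants
`C l > 0` for each multi-index `l` be given.  For every `ε > 0` and multi-index `l`
there is `C' > 0` such that: for all `h ∈ (0,1)`, all `1 ≤ N ≤ log (1/h)` and all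
smooth `a_1, …, a_N` supported in `K` with `sup ‖a_j‖ ≤ 1` and
`sup ‖∂_y^{α'} ∂_η^{β'} a_j‖ ≤ C_{α'β'} h^{-ρ|α'| - ρ'|β'|}`, the product satisfies
`sup ‖∂_y^α ∂_η^β (a_1 ⋯ a_N)‖ ≤ C' h^{-ρ|α| - ρ'|β| - ε}`. -/
theorem product_of_many_symbols
    (n : ℕ) (hn : 1 ≤ n) (ρ ρ' : ℝ) (hρ'0 : 0 ≤ ρ') (hρ'ρ : ρ' ≤ ρ)
    (K : Set ((Fin n → ℝ) × (Fin n → ℝ))) (hK : IsCompact K)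
    (C : List (Fin n ⊕ Fin n) → ℝ) (hCpos : ∀ l, 0 < C l) :
    ∀ ε > 0, ∀ l : List (Fin n ⊕ Fin n), ∃ C' > 0,
      ∀ h : ℝ, h ∈ Set.Ioo (0:ℝ) 1 →
      ∀ N : ℕ, 1 ≤ N → (N : ℝ) ≤ Real.log (1 / h) →
      ∀ a : Fin N → ((Fin n → ℝ) × (Fin n → ℝ)) → ℂ,
        (∀ j, ContDiff ℝ (⊤ : ℕ∞) (a j)) →
        (∀ j, tsupport (a j) ⊆ K) →
        (∀ j p, ‖a j p‖ ≤ 1) →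
        (∀ j (l' : List (Fin n ⊕ Fin n)) p,
          ‖pderivs l' (a j) p‖ ≤
            C l' * h ^ (-(ρ * (l'.countP Sum.isLeft : ℕ)
              + ρ' * (l'.countP Sum.isRight : ℕ)))) →
        ∀ p, ‖pderivs l (fun q => ∏ j, a j q) p‖ ≤
          C' * h ^ (-(ρ * (l.countP Sum.isLeft : ℕ)
            + ρ' * (l.countP Sum.isRight : ℕ)) - ε) := by
  intro ε hε l
  obtain ⟨D, hD0, hDb⟩ := PMS.key ρ ρ' C hCpos l
  set m := l.length with hm
  set Kε : ℝ := (1 + m / ε) ^ m with hK2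
  have hK0 : 0 < Kε := pow_pos (by positivity) m
  refine ⟨D * Kε, mul_pos hD0 hK0, ?_⟩
  rintro h ⟨h0, h1⟩ N hN1 hNlog a hsm _ hb1 hb p
  have hb' : ∀ j l' p, ‖pderivs l' (a j) p‖ ≤ C l' * h ^ PMS.expo ρ ρ' l' := hb
  have hmain := hDb h h0 h1 N hN1 a hsm hb1 hb' p
  have hx1 : (1:ℝ) ≤ 1 / h := by rw [le_div_iff₀ h0]; linarith
  have hpw : (N:ℝ) ^ m ≤ Kε * h ^ (-ε) := by
    have s1 : (N:ℝ) ^ m ≤ (Real.log (1/h)) ^ m :=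
      pow_le_pow_left₀ (Nat.cast_nonneg N) hNlog m
    have s2 := PMS.log_pow_le (1/h) hx1 ε hε m
    have s3 : (1/h) ^ ε = h ^ (-ε) := by
      rw [one_div, Real.inv_rpow h0.le, ← Real.rpow_neg h0.le]
    rw [s3] at s2
    linarith
  have hE0 : (0:ℝ) ≤ h ^ PMS.expo ρ ρ' l := (Real.rpow_pos_of_pos h0 _).le
  show ‖pderivs l (fun q => ∏ j, a j q) p‖ ≤ D * Kε * h ^ (PMS.expo ρ ρ' l - ε)
  calc ‖pderivs l (fun q => ∏ j, a j q) p‖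
      ≤ D * (N:ℝ) ^ m * h ^ PMS.expo ρ ρ' l := hmain
    _ ≤ D * (Kε * h ^ (-ε)) * h ^ PMS.expo ρ ρ' l := by
        apply mul_le_mul_of_nonneg_right _ hE0
        exact mul_le_mul_of_nonneg_left hpw hD0.le
    _ = (D * Kε) * (h ^ (-ε) * h ^ PMS.expo ρ ρ' l) := by ring
    _ = (D * Kε) * h ^ (PMS.expo ρ ρ' l - ε) := by
        rw [← Real.rpow_add h0]; congr 1; ring
end
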